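/- arXiv:2005.08058 — 2 statements merged into one kernel-verified Lean document; each statement's English description precedes it below -/
import Mathlib

section
/- For every finite simple graph G and every vertex x of G, the eternal vertex cover number satisfies evc(G_x^+) ≤ evc(G) + 1, where G_x^+ is obtained from G by adding one new vertex adjacent only to x. -/
open SimpleGraph

namespace EVC

variable {V : Type}

/-- `S` is a vertex cover of `G`. -/
def IsCover (G : SimpleGraph V) (S : Set V) : Prop :=
  ∀ ⦃u v : V⦄, G.Adj u v → u ∈ S ∨ v ∈ S

/-- A valid movement of guards from configuration `C` to configuration `C'`, witnessed by a
multiset `M` of (source, target) pairs (a bijection between the two multisets of guards):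
every guard either stays in place or moves to an adjacent vertex. -/
def ValidMove (G : SimpleGraph V) (C C' : Multiset V) (M : Multiset (V × V)) : Prop :=
  M.map Prod.fst = C ∧ M.map Prod.snd = C' ∧ ∀ p ∈ M, p.1 = p.2 ∨ G.Adj p.1 p.2

/-- A defense strategy on `G` with `k` guards: a nonempty family of vertex-cover
configurations of size `k` such that any attack on an edge can be defended by a valid
move staying within the family. -/
def IsDefense (G : SimpleGraph V) (k : ℕ) (F : Set (Multiset V)) : Prop :=
  F.Nonempty ∧
  (∀ C ∈ F, Multiset.card C = k ∧ IsCover G {v | v ∈ C}) ∧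
  (∀ C ∈ F, ∀ u v : V, G.Adj u v →
    ∃ C' ∈ F, ∃ M : Multiset (V × V), ValidMove G C C' M ∧ ((u, v) ∈ M ∨ (v, u) ∈ M))

/-- The eternal vertex cover number of `G`. -/
noncomputable def evc (G : SimpleGraph V) : ℕ :=
  sInf {k | ∃ F : Set (Multiset V), IsDefense G k F}

/-- `evc_S(G)`: the minimum number of guards of a defense strategy on `G` in which every
vertex of `S` is occupied in every configuration. -/
noncomputable def evcOn (G : SimpleGraph V) (S : Set V) : ℕ :=
  sInf {k | ∃ F : Set (Multiset V), IsDefense G k F ∧ ∀ C ∈ F, ∀ s ∈ S, s ∈ C}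

/-- `C` is an eternal vertex cover configuration of `G`: it belongs to some defense strategy. -/
def IsEvcConfig (G : SimpleGraph V) (C : Multiset V) : Prop :=
  ∃ (k : ℕ) (F : Set (Multiset V)), IsDefense G k F ∧ C ∈ F

open Classical in
/-- The number of guards of configuration `C` that lie in the set `S`. -/
noncomputable def guardsOn (C : Multiset V) (S : Set V) : ℕ :=
  Multiset.card (C.filter (fun v => v ∈ S))

/-- `G_x^+`: the graph `G` together with one new vertex (`none`) adjacent only to `x`. -/
def addPendant (G : SimpleGraph V) (x : V) : SimpleGraph (Option V) :=
  SimpleGraph.fromRel (fun a b =>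
    (∃ u w : V, a = some u ∧ b = some w ∧ G.Adj u w) ∨ (a = none ∧ b = some x))

/-- The induced subgraph of `G` obtained by deleting the vertex `x`. -/
abbrev delVert (G : SimpleGraph V) (x : V) : SimpleGraph {v : V | v ≠ x} :=
  G.induce {v : V | v ≠ x}

/-- `x` is a cut vertex of `G`: deleting `x` separates two vertices that were connected. -/
def IsCutVertex (G : SimpleGraph V) (x : V) : Prop :=
  ∃ (u v : V) (hu : u ≠ x) (hv : v ≠ x), G.Reachable u v ∧
    ¬ (delVert G x).Reachable ⟨u, hu⟩ ⟨v, hv⟩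

/-- `G` is Type 1 with respect to `x`: `evc(G_x^+) = evc_x(G)`. -/
def Type1 (G : SimpleGraph V) (x : V) : Prop := evc (addPendant G x) = evcOn G {x}

/-- `G` is Type 2 with respect to `x`: `evc(G_x^+) > evc_x(G)`. -/
def Type2 (G : SimpleGraph V) (x : V) : Prop := evcOn G {x} < evc (addPendant G x)

/-- The vertex set of the `x`-component of `G` corresponding to the connected component `H`
of `G − x`: the vertices of `H` together with `x`. -/
def xCompSet (G : SimpleGraph V) (x : V) (H : (delVert G x).ConnectedComponent) : Set V :=
  insert x (Subtype.val '' H.supp)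

lemma x_mem_xCompSet (G : SimpleGraph V) (x : V) (H : (delVert G x).ConnectedComponent) :
    x ∈ xCompSet G x H := Set.mem_insert _ _

/-- `evc_x(G_i)` for the `x`-component `G_i` of `G` corresponding to `H`. -/
noncomputable def evcComp (G : SimpleGraph V) (x : V)
    (H : (delVert G x).ConnectedComponent) : ℕ :=
  evcOn (G.induce (xCompSet G x H)) {(⟨x, x_mem_xCompSet G x H⟩ : ↥(xCompSet G x H))}

/-- The `x`-component of `G` corresponding to `H` is Type 1 with respect to `x`. -/
def CompType1 (G : SimpleGraph V) (x : V) (H : (delVert G x).ConnectedComponent) : Prop :=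
  Type1 (G.induce (xCompSet G x H)) ⟨x, x_mem_xCompSet G x H⟩

/-- The `x`-component of `G` corresponding to `H` is Type 2 with respect to `x`. -/
def CompType2 (G : SimpleGraph V) (x : V) (H : (delVert G x).ConnectedComponent) : Prop :=
  Type2 (G.induce (xCompSet G x H)) ⟨x, x_mem_xCompSet G x H⟩

/-- The substructure property: for every non-cut vertex `x` of `G` and every `x`-extension
`G'` of `G` (i.e. every connected graph `G'` having `G` as an `x`-component, via an
isomorphism `φ` identifying `x` with a cut vertex `x'` of `G'`), every eternal vertex cover
configuration of `G'` has at least `evc_x(G) − 1` guards on the copy of `V(G)` in case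
`evc(G_x^+) ≤ evc_x(G)`, and at least `evc_x(G)` guards on it in case
`evc(G_x^+) > evc_x(G)`. -/
def SubstructureProperty (G : SimpleGraph V) : Prop :=
  ∀ x : V, ¬ IsCutVertex G x →
  ∀ (V' : Type) [Finite V'], ∀ (G' : SimpleGraph V') (x' : V'),
    G'.Connected → IsCutVertex G' x' →
  ∀ (H : (delVert G' x').ConnectedComponent) (φ : G ≃g G'.induce (xCompSet G' x' H)),
    (φ x : ↥(xCompSet G' x' H)).1 = x' →
  ∀ C' : Multiset V', IsEvcConfig G' C' →
    (evc (addPendant G x) ≤ evcOn G {x} →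
        evcOn G {x} - 1 ≤ guardsOn C' (xCompSet G' x' H)) ∧
    (evcOn G {x} < evc (addPendant G x) →
        evcOn G {x} ≤ guardsOn C' (xCompSet G' x' H))

/-- The `x`-component corresponding to `H` is edge-disjoint from (the induced subgraph on)
the vertex set `S`. -/
def EdgeDisjointComp (G : SimpleGraph V) (S : Set V) (x : V)
    (H : (delVert G x).ConnectedComponent) : Prop :=
  ∀ u v : V, G.Adj u v → u ∈ S → v ∈ S →
    ¬(u ∈ xCompSet G x H ∧ v ∈ xCompSet G x H)

/-- The components attached to the vertex set `S` (of a block or a path): pairs `(x, H)`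
with `x ∈ X ∩ S` a cut vertex on `S` and `H` a component of `G − x` whose `x`-component
is edge-disjoint from `S`. -/
def SComponents (G : SimpleGraph V) (X S : Set V) :
    Set (Σ x : V, (delVert G x).ConnectedComponent) :=
  {p | p.1 ∈ X ∧ p.1 ∈ S ∧ EdgeDisjointComp G S p.1 p.2}

/-- `χ(G, S)` where `S` is the vertex set of a block or a path of `G` and `X` is the set
of cut vertices of `G`. -/
noncomputable def chi (G : SimpleGraph V) (X S : Set V) : ℕ :=
  Nat.card ↥(S ∩ X)
    + ∑ᶠ p ∈ {p ∈ SComponents G X S | CompType1 G p.1 p.2}, (evcComp G p.1 p.2 - 2)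
    + ∑ᶠ p ∈ {p ∈ SComponents G X S | CompType2 G p.1 p.2}, (evcComp G p.1 p.2 - 1)

/-- The set `S` induces a block of `G`: a maximal (vertex set of a) connected induced
subgraph having no cut vertex. -/
def IsBlock (G : SimpleGraph V) (S : Set V) : Prop :=
  (G.induce S).Connected ∧ (∀ y : ↥S, ¬ IsCutVertex (G.induce S) y) ∧
  ∀ T : Set V, S ⊆ T → (G.induce T).Connected →
    (∀ y : ↥T, ¬ IsCutVertex (G.induce T) y) → T ⊆ S

/-- The induced subgraph of `G` on `S` is a cycle: there is a chordless cycle of `G` whose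
vertex set is exactly `S`. -/
def IsCycleSet (G : SimpleGraph V) (S : Set V) : Prop :=
  ∃ (a : V) (c : G.Walk a a), c.IsCycle ∧ S = {v | v ∈ c.support} ∧
    ∀ u v : V, u ∈ c.support → v ∈ c.support → G.Adj u v → s(u, v) ∈ c.edges

/-- `G` is chordal: every cycle of length at least four has a chord. -/
def IsChordal (G : SimpleGraph V) : Prop :=
  ∀ (a : V) (c : G.Walk a a), c.IsCycle → 4 ≤ c.length →
    ∃ u v : V, u ∈ c.support ∧ v ∈ c.support ∧ G.Adj u v ∧ s(u, v) ∉ c.edges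

/-- `G` is biconnected (2-connected): connected, at least three vertices, no cut vertex. -/
def IsBiconnected (G : SimpleGraph V) : Prop :=
  G.Connected ∧ 3 ≤ Nat.card V ∧ ∀ x : V, ¬ IsCutVertex G x

/-- `G` is a cactus: connected, and any two distinct simple cycles share at most one vertex. -/
def IsCactus (G : SimpleGraph V) : Prop :=
  G.Connected ∧
  ∀ (a b : V) (c₁ : G.Walk a a) (c₂ : G.Walk b b), c₁.IsCycle → c₂.IsCycle →
    {e | e ∈ c₁.edges} ≠ {e | e ∈ c₂.edges} →
    {v | v ∈ c₁.support ∧ v ∈ c₂.support}.Subsingleton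

/-- `mvc_S(G)`: minimum cardinality of a vertex cover of `G` containing all vertices of `S`. -/
noncomputable def mvcOn (G : SimpleGraph V) (S : Set V) : ℕ :=
  sInf {k | ∃ T : Set V, IsCover G T ∧ S ⊆ T ∧ Nat.card ↥T = k}

/-- `P` is an induced path of `G`. -/
def IsInducedPath (G : SimpleGraph V) {a b : V} (P : G.Walk a b) : Prop :=
  P.IsPath ∧ ∀ u v : V, u ∈ P.support → v ∈ P.support → G.Adj u v → s(u, v) ∈ P.edges

/-- `P` is obtained by removing one edge from an induced cycle of `G`. -/
def IsInducedCycleMinusEdge (G : SimpleGraph V) {a b : V} (P : G.Walk a b) : Prop :=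
  P.IsPath ∧ 2 ≤ P.length ∧ G.Adj a b ∧
    ∀ u v : V, u ∈ P.support → v ∈ P.support → G.Adj u v →
      (s(u, v) ∈ P.edges ∨ s(u, v) = s(a, b))

open Classical in
/-- `P` is an eventful path of `G` (with `X` the set of cut vertices of `G`): it is an
induced path or an induced cycle minus an edge, its endpoints lie in `X`, and every
(contiguous) subpath of `P` with both endpoints in `X` has an even number of vertices
outside `X`. -/
def Eventful (G : SimpleGraph V) (X : Set V) {a b : V} (P : G.Walk a b) : Prop :=
  (IsInducedPath G P ∨ IsInducedCycleMinusEdge G P) ∧ a ∈ X ∧ b ∈ X ∧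
    ∀ i j : Fin P.support.length, (i : ℕ) ≤ (j : ℕ) →
      P.support.get i ∈ X → P.support.get j ∈ X →
      Even (Multiset.countP (fun v => v ∉ X)
        (((P.support.drop (i : ℕ)).take ((j : ℕ) - (i : ℕ) + 1) : List V) : Multiset V))

/-- The vertex bunch `VB_G(P)` of the path `P`: `V(P)` together with all vertices of the
`P`-components. -/
def vertexBunch (G : SimpleGraph V) (X : Set V) {a b : V} (P : G.Walk a b) : Set V :=
  {v | v ∈ P.support} ∪
    ⋃ p ∈ SComponents G X {v | v ∈ P.support}, xCompSet G p.1 p.2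

lemma addPendant_adj_some_some {G : SimpleGraph V} {x u w : V} :
    (addPendant G x).Adj (some u) (some w) ↔ G.Adj u w := by
  simp only [addPendant, fromRel_adj]
  constructor
  · rintro ⟨hne, h | h⟩
    · rcases h with ⟨a, b, ha, hb, hab⟩ | ⟨h1, h2⟩
      · obtain rfl := Option.some.inj ha
        obtain rfl := Option.some.inj hb
        exact hab
      · simp at h1
    · rcases h with ⟨a, b, ha, hb, hab⟩ | ⟨h1, h2⟩
      · obtain rfl := Option.some.inj ha
        obtain rfl := Option.some.inj hb
        exact hab.symm
      · simp at h1
  · intro h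
    exact ⟨by simp [h.ne], Or.inl (Or.inl ⟨u, w, rfl, rfl, h⟩)⟩

lemma addPendant_adj_none {G : SimpleGraph V} {x : V} :
    (addPendant G x).Adj none (some x) := by
  simp [addPendant, fromRel_adj]

lemma addPendant_adj_cases {G : SimpleGraph V} {x : V} {a b : Option V}
    (h : (addPendant G x).Adj a b) :
    (∃ u w : V, a = some u ∧ b = some w ∧ G.Adj u w) ∨
      (a = none ∧ b = some x) ∨ (a = some x ∧ b = none) := by
  rcases h with ⟨hne, h | h⟩
  · rcases h with ⟨u, w, rfl, rfl, hab⟩ | ⟨rfl, rfl⟩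
    · exact Or.inl ⟨u, w, rfl, rfl, hab⟩
    · exact Or.inr (Or.inl ⟨rfl, rfl⟩)
  · rcases h with ⟨u, w, rfl, rfl, hab⟩ | ⟨rfl, rfl⟩
    · exact Or.inl ⟨w, u, rfl, rfl, hab.symm⟩
    · exact Or.inr (Or.inr ⟨rfl, rfl⟩)

lemma exists_defense [Finite V] (G : SimpleGraph V) :
    ∃ k, ∃ F : Set (Multiset V), IsDefense G k F := by
  classical
  have : Fintype V := Fintype.ofFinite V
  set C₀ : Multiset V := Finset.univ.val with hC₀
  refine ⟨Multiset.card C₀, {C₀}, ⟨C₀, rfl⟩, ?_, ?_⟩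
  · rintro C rfl
    exact ⟨rfl, fun u v _ => Or.inl (by simp [hC₀])⟩
  · rintro C rfl u v huv
    have hv : v ∈ C₀ := by simp [hC₀]
    have hu : u ∈ C₀ := by simp [hC₀]
    have hvC : v ∈ C₀.erase u := by
      rw [Multiset.mem_erase_of_ne huv.symm.ne]; exact hv
    have huC : u ∈ C₀.erase v := by
      rw [Multiset.mem_erase_of_ne huv.ne]; exact hu
    refine ⟨C₀, rfl, (u, v) ::ₘ (v, u) ::ₘ ((C₀.erase u).erase v).map (fun w => (w, w)),
      ⟨?_, ?_, ?_⟩, Or.inl (Multiset.mem_cons_self _ _)⟩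
    · simp only [Multiset.map_cons, Multiset.map_map, Function.comp_def, Multiset.map_id']
      rw [Multiset.cons_erase hvC, Multiset.cons_erase hu]
    · simp only [Multiset.map_cons, Multiset.map_map, Function.comp_def, Multiset.map_id']
      rw [Multiset.erase_comm, Multiset.cons_erase huC, Multiset.cons_erase hv]
    · intro p hp
      rcases Multiset.mem_cons.1 hp with rfl | hp
      · exact Or.inr huv
      rcases Multiset.mem_cons.1 hp with rfl | hp
      · exact Or.inr huv.symm
      rcases Multiset.mem_map.1 hp with ⟨w, _, rfl⟩
      exact Or.inl rfl
/-- For every finite simple graph `G` and vertex `x`,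
`evc(G_x^+) ≤ evc(G) + 1`. -/
theorem evc_addPendant_le (V : Type) [Finite V] (G : SimpleGraph V) (x : V) :
    evc (addPendant G x) ≤ evc G + 1 := by
  classical
  obtain ⟨k₀, F₀, hF₀⟩ := exists_defense G
  have hmem : evc G ∈ {k | ∃ F : Set (Multiset V), IsDefense G k F} :=
    Nat.sInf_mem ⟨k₀, F₀, hF₀⟩
  obtain ⟨F, hF⟩ := hmem
  obtain ⟨⟨C₁, hC₁⟩, hcard, hdef⟩ := hF
  -- the lifted family
  set F' : Set (Multiset (Option V)) :=
    {D | ∃ C ∈ F, D = (some x) ::ₘ C.map some ∨ D = none ::ₘ C.map some} with hF'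
  have hmemF' : ∀ C ∈ F, ((some x) ::ₘ C.map some) ∈ F' ∧ (none ::ₘ C.map some) ∈ F' :=
    fun C hC => ⟨⟨C, hC, Or.inl rfl⟩, ⟨C, hC, Or.inr rfl⟩⟩
  have hdefense : IsDefense (addPendant G x) (evc G + 1) F' := by
    refine ⟨⟨_, (hmemF' C₁ hC₁).1⟩, ?_, ?_⟩
    · rintro D ⟨C, hC, hD | hD⟩ <;> subst hD <;>
      · refine ⟨by simp [(hcard C hC).1], ?_⟩
        intro a b hab
        rcases addPendant_adj_cases hab with ⟨u, w, rfl, rfl, huw⟩ | ⟨rfl, rfl⟩ | ⟨rfl, rfl⟩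
        · rcases (hcard C hC).2 huw with h | h
          · exact Or.inl (Multiset.mem_cons_of_mem (Multiset.mem_map_of_mem _ h))
          · exact Or.inr (Multiset.mem_cons_of_mem (Multiset.mem_map_of_mem _ h))
        · simp [Multiset.mem_cons]
        · simp [Multiset.mem_cons]
    · rintro D ⟨C, hC, hD | hD⟩ <;> subst hD <;> intro a b hab <;>
        rcases addPendant_adj_cases hab with ⟨u, w, rfl, rfl, huw⟩ | ⟨rfl, rfl⟩ | ⟨rfl, rfl⟩
      -- case D = some x ::ₘ C.map some, G-edge
      · obtain ⟨C', hC', M₀, ⟨hfst, hsnd, hmove⟩, hM₀⟩ := hdef C hC u w huw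
        refine ⟨(some x) ::ₘ C'.map some, (hmemF' C' hC').1,
          (some x, some x) ::ₘ M₀.map (fun p => (some p.1, some p.2)), ⟨?_, ?_, ?_⟩, ?_⟩
        · simp only [Multiset.map_cons, Multiset.map_map, Function.comp_def]
          rw [show M₀.map (fun p : V × V => some p.1) = (M₀.map Prod.fst).map some by
            rw [Multiset.map_map]; rfl, hfst]
        · simp only [Multiset.map_cons, Multiset.map_map, Function.comp_def]
          rw [show M₀.map (fun p : V × V => some p.2) = (M₀.map Prod.snd).map some by
            rw [Multiset.map_map]; rfl, hsnd]
        · intro p hp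
          rcases Multiset.mem_cons.1 hp with rfl | hp
          · exact Or.inl rfl
          rcases Multiset.mem_map.1 hp with ⟨q, hq, rfl⟩
          rcases hmove q hq with h | h
          · exact Or.inl (by rw [h])
          · exact Or.inr (addPendant_adj_some_some.2 h)
        · rcases hM₀ with h | h
          · exact Or.inl (Multiset.mem_cons_of_mem
              (Multiset.mem_map.2 ⟨(u, w), h, rfl⟩))
          · exact Or.inr (Multiset.mem_cons_of_mem
              (Multiset.mem_map.2 ⟨(w, u), h, rfl⟩))
      -- case D = some x ::ₘ ..., pendant edge none→some x
      · refine ⟨none ::ₘ C.map some, (hmemF' C hC).2,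
          (some x, none) ::ₘ (C.map some).map (fun w => (w, w)), ⟨?_, ?_, ?_⟩, ?_⟩
        · simp [Multiset.map_map, Function.comp_def, Multiset.map_id']
        · simp [Multiset.map_map, Function.comp_def, Multiset.map_id']
        · intro p hp
          rcases Multiset.mem_cons.1 hp with rfl | hp
          · exact Or.inr addPendant_adj_none.symm
          rcases Multiset.mem_map.1 hp with ⟨q, hq, rfl⟩
          exact Or.inl rfl
        · exact Or.inr (Multiset.mem_cons_self _ _)
      -- case D = some x ::ₘ ..., pendant edge some x→none
      · refine ⟨none ::ₘ C.map some, (hmemF' C hC).2,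
          (some x, none) ::ₘ (C.map some).map (fun w => (w, w)), ⟨?_, ?_, ?_⟩, ?_⟩
        · simp [Multiset.map_map, Function.comp_def, Multiset.map_id']
        · simp [Multiset.map_map, Function.comp_def, Multiset.map_id']
        · intro p hp
          rcases Multiset.mem_cons.1 hp with rfl | hp
          · exact Or.inr addPendant_adj_none.symm
          rcases Multiset.mem_map.1 hp with ⟨q, hq, rfl⟩
          exact Or.inl rfl
        · exact Or.inl (Multiset.mem_cons_self _ _)
      -- case D = none ::ₘ C.map some, G-edge
      · obtain ⟨C', hC', M₀, ⟨hfst, hsnd, hmove⟩, hM₀⟩ := hdef C hC u w huw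
        refine ⟨none ::ₘ C'.map some, (hmemF' C' hC').2,
          (none, none) ::ₘ M₀.map (fun p => (some p.1, some p.2)), ⟨?_, ?_, ?_⟩, ?_⟩
        · simp only [Multiset.map_cons, Multiset.map_map, Function.comp_def]
          rw [show M₀.map (fun p : V × V => some p.1) = (M₀.map Prod.fst).map some by
            rw [Multiset.map_map]; rfl, hfst]
        · simp only [Multiset.map_cons, Multiset.map_map, Function.comp_def]
          rw [show M₀.map (fun p : V × V => some p.2) = (M₀.map Prod.snd).map some by
            rw [Multiset.map_map]; rfl, hsnd]
        · intro p hp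
          rcases Multiset.mem_cons.1 hp with rfl | hp
          · exact Or.inl rfl
          rcases Multiset.mem_map.1 hp with ⟨q, hq, rfl⟩
          rcases hmove q hq with h | h
          · exact Or.inl (by rw [h])
          · exact Or.inr (addPendant_adj_some_some.2 h)
        · rcases hM₀ with h | h
          · exact Or.inl (Multiset.mem_cons_of_mem
              (Multiset.mem_map.2 ⟨(u, w), h, rfl⟩))
          · exact Or.inr (Multiset.mem_cons_of_mem
              (Multiset.mem_map.2 ⟨(w, u), h, rfl⟩))
      -- case D = none ::ₘ ..., pendant edge none→some x
      · refine ⟨(some x) ::ₘ C.map some, (hmemF' C hC).1,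
          (none, some x) ::ₘ (C.map some).map (fun w => (w, w)), ⟨?_, ?_, ?_⟩, ?_⟩
        · simp [Multiset.map_map, Function.comp_def, Multiset.map_id']
        · simp [Multiset.map_map, Function.comp_def, Multiset.map_id']
        · intro p hp
          rcases Multiset.mem_cons.1 hp with rfl | hp
          · exact Or.inr addPendant_adj_none
          rcases Multiset.mem_map.1 hp with ⟨q, hq, rfl⟩
          exact Or.inl rfl
        · exact Or.inl (Multiset.mem_cons_self _ _)
      -- case D = none ::ₘ ..., pendant edge some x→none
      · refine ⟨(some x) ::ₘ C.map some, (hmemF' C hC).1,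
          (none, some x) ::ₘ (C.map some).map (fun w => (w, w)), ⟨?_, ?_, ?_⟩, ?_⟩
        · simp [Multiset.map_map, Function.comp_def, Multiset.map_id']
        · simp [Multiset.map_map, Function.comp_def, Multiset.map_id']
        · intro p hp
          rcases Multiset.mem_cons.1 hp with rfl | hp
          · exact Or.inr addPendant_adj_none
          rcases Multiset.mem_map.1 hp with ⟨q, hq, rfl⟩
          exact Or.inl rfl
        · exact Or.inr (Multiset.mem_cons_self _ _)
  exact Nat.sInf_le ⟨F', hdefense⟩

end EVC
end

section
/- Let G be a finite simple graph, let x ∈ V(G), let H = G_x^+, and let v be the unique vertex in V(H) \ V(G). Then evc_v(H) = evc_x(G) + 1. -/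
open SimpleGraph

namespace EVC

variable {V : Type}

/-! ### Auxiliary lemmas for Statement 7 -/

lemma addPendant_adj {G : SimpleGraph V} {x : V} {a b : Option V} :
    (addPendant G x).Adj a b ↔
      (∃ u w : V, a = some u ∧ b = some w ∧ G.Adj u w) ∨
      (a = none ∧ b = some x) ∨ (a = some x ∧ b = none) := by
  unfold addPendant
  rw [SimpleGraph.fromRel_adj]
  constructor
  · rintro ⟨hne, (⟨u, w, ha, hb, h⟩ | ⟨ha, hb⟩) | (⟨u, w, hb, ha, h⟩ | ⟨hb, ha⟩)⟩
    · exact Or.inl ⟨u, w, ha, hb, h⟩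
    · exact Or.inr (Or.inl ⟨ha, hb⟩)
    · exact Or.inl ⟨w, u, ha, hb, h.symm⟩
    · exact Or.inr (Or.inr ⟨ha, hb⟩)
  · rintro (⟨u, w, rfl, rfl, h⟩ | ⟨rfl, rfl⟩ | ⟨rfl, rfl⟩)
    · exact ⟨by simpa using h.ne, Or.inl (Or.inl ⟨u, w, rfl, rfl, h⟩)⟩
    · exact ⟨by simp, Or.inl (Or.inr ⟨rfl, rfl⟩)⟩
    · exact ⟨by simp, Or.inr (Or.inr ⟨rfl, rfl⟩)⟩

/-- A "swap" move along an attacked edge whose endpoints are both occupied: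
the configuration is unchanged. -/
lemma swap_move {α : Type} [DecidableEq α] (G : SimpleGraph α) {u v : α} (h : G.Adj u v)
    {C : Multiset α} (hu : u ∈ C) (hv : v ∈ C) :
    ∃ M : Multiset (α × α), ValidMove G C C M ∧ (u, v) ∈ M := by
  have hne : u ≠ v := G.ne_of_adj h
  have hv' : v ∈ C.erase u := (Multiset.mem_erase_of_ne hne.symm).2 hv
  refine ⟨(u, v) ::ₘ (v, u) ::ₘ ((C.erase u).erase v).map (fun w => (w, w)),
    ⟨?_, ?_, ?_⟩, by simp⟩
  · rw [Multiset.map_cons, Multiset.map_cons, Multiset.map_map]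
    simp only [Function.comp_def]
    rw [Multiset.map_id', Multiset.cons_erase hv', Multiset.cons_erase hu]
  · rw [Multiset.map_cons, Multiset.map_cons, Multiset.map_map]
    simp only [Function.comp_def]
    rw [Multiset.map_id', Multiset.cons_swap, Multiset.cons_erase hv', Multiset.cons_erase hu]
  · intro p hp
    rcases Multiset.mem_cons.1 hp with rfl | hp
    · exact Or.inr h
    rcases Multiset.mem_cons.1 hp with rfl | hp
    · exact Or.inr h.symm
    obtain ⟨w, _, rfl⟩ := Multiset.mem_map.1 hp
    exact Or.inl rfl

lemma two_le_count_map {α β : Type} [DecidableEq α] [DecidableEq β] {s : Multiset α}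
    {a b : α} {f : α → β} {y : β} (ha : a ∈ s) (hb : b ∈ s.erase a)
    (hfa : f a = y) (hfb : f b = y) : 2 ≤ Multiset.count y (s.map f) := by
  rw [← Multiset.cons_erase ha, Multiset.map_cons, hfa, Multiset.count_cons_self]
  have hmem : y ∈ (s.erase a).map f := by
    rw [← hfb]; exact Multiset.mem_map_of_mem f hb
  have := Multiset.one_le_count_iff_mem.2 hmem
  omega

/-- From a defense of `G` keeping `x` occupied, build a defense of `G_x^+` with one more
guard keeping the pendant vertex occupied. -/
lemma pendant_upper {G : SimpleGraph V} {x : V} {k : ℕ} {F : Set (Multiset V)}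
    (hF : IsDefense G k F) (hx : ∀ C ∈ F, x ∈ C) :
    ∃ F' : Set (Multiset (Option V)), IsDefense (addPendant G x) (k + 1) F' ∧
      ∀ C ∈ F', (none : Option V) ∈ C := by
  classical
  obtain ⟨hne, hcov, hdef⟩ := hF
  refine ⟨(fun C => (none : Option V) ::ₘ C.map some) '' F, ⟨hne.image _, ?_, ?_⟩, ?_⟩
  · rintro D ⟨C, hC, rfl⟩
    refine ⟨by simp [(hcov C hC).1], ?_⟩
    intro a b hab
    rcases addPendant_adj.1 hab with ⟨u, w, rfl, rfl, h⟩ | ⟨rfl, rfl⟩ | ⟨rfl, rfl⟩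
    · rcases (hcov C hC).2 h with hu | hw
      · exact Or.inl (Multiset.mem_cons_of_mem (Multiset.mem_map_of_mem some hu))
      · exact Or.inr (Multiset.mem_cons_of_mem (Multiset.mem_map_of_mem some hw))
    · exact Or.inl (by simp)
    · exact Or.inr (by simp)
  · rintro D ⟨C, hC, rfl⟩ a b hab
    rcases addPendant_adj.1 hab with ⟨u, w, rfl, rfl, h⟩ | ⟨rfl, rfl⟩ | ⟨rfl, rfl⟩
    · obtain ⟨C', hC', M, ⟨hf1, hf2, hval⟩, hmem⟩ := hdef C hC u w h
      refine ⟨(none : Option V) ::ₘ C'.map some, ⟨C', hC', rfl⟩,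
        ((none : Option V), (none : Option V)) ::ₘ M.map (Prod.map some some), ⟨?_, ?_, ?_⟩, ?_⟩
      · rw [Multiset.map_cons, Multiset.map_map]
        have : M.map (Prod.fst ∘ Prod.map some some) = C.map some := by
          rw [show Prod.fst ∘ Prod.map some some = some ∘ (Prod.fst : V × V → V) from rfl,
            ← Multiset.map_map, hf1]
        rw [this]
      · rw [Multiset.map_cons, Multiset.map_map]
        have : M.map (Prod.snd ∘ Prod.map some some) = C'.map some := by
          rw [show Prod.snd ∘ Prod.map some some = some ∘ (Prod.snd : V × V → V) from rfl,
            ← Multiset.map_map, hf2]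
        rw [this]
      · intro p hp
        rcases Multiset.mem_cons.1 hp with rfl | hp
        · exact Or.inl rfl
        obtain ⟨q, hq, rfl⟩ := Multiset.mem_map.1 hp
        rcases hval q hq with heq | hadj
        · exact Or.inl (by simp [heq])
        · exact Or.inr (addPendant_adj.2 (Or.inl ⟨q.1, q.2, rfl, rfl, hadj⟩))
      · rcases hmem with hm | hm
        · exact Or.inl (Multiset.mem_cons_of_mem
            (by simpa using Multiset.mem_map_of_mem (Prod.map some some) hm))
        · exact Or.inr (Multiset.mem_cons_of_mem
            (by simpa using Multiset.mem_map_of_mem (Prod.map some some) hm))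
    · have hadj : (addPendant G x).Adj none (some x) := addPendant_adj.2 (Or.inr (Or.inl ⟨rfl, rfl⟩))
      have hn : (none : Option V) ∈ (none : Option V) ::ₘ C.map some := by simp
      have hsx : (some x : Option V) ∈ (none : Option V) ::ₘ C.map some := by
        exact Multiset.mem_cons_of_mem (Multiset.mem_map_of_mem some (hx C hC))
      obtain ⟨M, hM, hmem⟩ := swap_move (addPendant G x) hadj hn hsx
      exact ⟨_, ⟨C, hC, rfl⟩, M, hM, Or.inl hmem⟩
    · have hadj : (addPendant G x).Adj (some x) none :=
        addPendant_adj.2 (Or.inr (Or.inr ⟨rfl, rfl⟩))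
      have hn : (none : Option V) ∈ (none : Option V) ::ₘ C.map some := by simp
      have hsx : (some x : Option V) ∈ (none : Option V) ::ₘ C.map some := by
        exact Multiset.mem_cons_of_mem (Multiset.mem_map_of_mem some (hx C hC))
      obtain ⟨M, hM, hmem⟩ := swap_move (addPendant G x) hadj hsx hn
      exact ⟨_, ⟨C, hC, rfl⟩, M, hM, Or.inl hmem⟩
  · rintro D ⟨C, hC, rfl⟩
    simp

/-- From a defense of `G_x^+` keeping the pendant vertex occupied, build a defense of `G`
with one fewer guard keeping `x` occupied. -/
lemma pendant_lower {G : SimpleGraph V} {x : V} {k : ℕ} {F : Set (Multiset (Option V))}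
    (hF : IsDefense (addPendant G x) k F) (hn : ∀ C ∈ F, (none : Option V) ∈ C) :
    ∃ F' : Set (Multiset V), IsDefense G (k - 1) F' ∧ ∀ C ∈ F', x ∈ C := by
  classical
  obtain ⟨hne, hcov, hdef⟩ := hF
  set f : Option V → V := fun o => o.getD x with hfdef
  -- key counting fact
  have key : ∀ C ∈ F, 2 ≤ Multiset.count x (C.map f) := by
    intro C hC
    by_cases hsx : some x ∈ C
    · exact two_le_count_map (hn C hC)
        ((Multiset.mem_erase_of_ne (by simp)).2 hsx) rfl rfl
    · by_cases h2 : 2 ≤ Multiset.count (none : Option V) C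
      · have : (none : Option V) ∈ C.erase none := by
          rw [← Multiset.one_le_count_iff_mem, Multiset.count_erase_self]
          omega
        exact two_le_count_map (hn C hC) this rfl rfl
      · exfalso
        have h1 : Multiset.count (none : Option V) C = 1 := by
          have := Multiset.one_le_count_iff_mem.2 (hn C hC)
          omega
        have hadj : (addPendant G x).Adj none (some x) :=
          addPendant_adj.2 (Or.inr (Or.inl ⟨rfl, rfl⟩))
        obtain ⟨C', hC', M, ⟨hf1, hf2, hval⟩, hmem⟩ := hdef C hC none (some x) hadj
        have hmem' : ((none : Option V), (some x : Option V)) ∈ M := by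
          rcases hmem with hm | hm
          · exact hm
          · exfalso
            apply hsx
            have : (some x : Option V) ∈ M.map Prod.fst := Multiset.mem_map_of_mem _ hm
            rwa [hf1] at this
        have hnn : ((none : Option V), (none : Option V)) ∈ M := by
          have : (none : Option V) ∈ M.map Prod.snd := by rw [hf2]; exact hn C' hC'
          obtain ⟨q, hq, hq2⟩ := Multiset.mem_map.1 this
          have hq1 : q.1 = none := by
            rcases hval q hq with heq | hadj'
            · rw [heq, hq2]
            · rcases addPendant_adj.1 hadj' with ⟨u, w, _, hw, _⟩ | ⟨h1', _⟩ | ⟨h1', h2'⟩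
              · rw [hq2] at hw; simp at hw
              · exact h1'
              · exfalso; apply hsx
                have : q.1 ∈ M.map Prod.fst := Multiset.mem_map_of_mem _ hq
                rw [hf1] at this; rwa [h1'] at this
          have : q = (none, none) := Prod.ext hq1 hq2
          rwa [this] at hq
        have : 2 ≤ Multiset.count (none : Option V) (M.map Prod.fst) :=
          two_le_count_map hmem'
            ((Multiset.mem_erase_of_ne (by simp)).2 hnn) rfl rfl
        rw [hf1, h1] at this
        omega
  have hxmem : ∀ C ∈ F, x ∈ C.map f := by
    intro C hC
    rw [← Multiset.count_pos]
    have := key C hC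
    omega
  have hsomemem : ∀ C ∈ F, ∀ z : V, some z ∈ C → z ∈ (C.map f).erase x := by
    intro C hC z hz
    have hz' : z ∈ C.map f := by
      have := Multiset.mem_map_of_mem f hz
      simpa [hfdef] using this
    by_cases h : z = x
    · subst h
      rw [← Multiset.one_le_count_iff_mem, Multiset.count_erase_self]
      have := key C hC
      omega
    · exact (Multiset.mem_erase_of_ne h).2 hz'
  refine ⟨(fun C => (C.map f).erase x) '' F, ⟨hne.image _, ?_, ?_⟩, ?_⟩
  · rintro D ⟨C, hC, rfl⟩
    refine ⟨?_, ?_⟩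
    · rw [Multiset.card_erase_of_mem (hxmem C hC)]
      simp [(hcov C hC).1]
    · intro u w huw
      have hH : (addPendant G x).Adj (some u) (some w) :=
        addPendant_adj.2 (Or.inl ⟨u, w, rfl, rfl, huw⟩)
      rcases (hcov C hC).2 hH with hu | hw
      · exact Or.inl (hsomemem C hC u hu)
      · exact Or.inr (hsomemem C hC w hw)
  · rintro D ⟨C, hC, rfl⟩ u w huw
    have hH : (addPendant G x).Adj (some u) (some w) :=
      addPendant_adj.2 (Or.inl ⟨u, w, rfl, rfl, huw⟩)
    obtain ⟨C', hC', M, ⟨hf1, hf2, hval⟩, hmem⟩ := hdef C hC (some u) (some w) hH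
    set M1 := M.map (Prod.map f f) with hM1
    have hxx : ((x, x) : V × V) ∈ M1 := by
      have : (none : Option V) ∈ M.map Prod.fst := by rw [hf1]; exact hn C hC
      obtain ⟨q, hq, hq1⟩ := Multiset.mem_map.1 this
      have hq2 : f q.2 = x := by
        rcases hval q hq with heq | hadj'
        · rw [← heq, hq1]; rfl
        · rcases addPendant_adj.1 hadj' with ⟨a', b', ha', _, _⟩ | ⟨_, hb'⟩ | ⟨ha', _⟩
          · rw [hq1] at ha'; simp at ha'
          · rw [hb']; rfl
          · rw [hq1] at ha'; simp at ha'
      have : Prod.map f f q = (x, x) := by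
        ext
        · simp [hq1]; rfl
        · simpa using hq2
      rw [← this]
      exact Multiset.mem_map_of_mem _ hq
    set M2 := M1.erase (x, x) with hM2
    have hM1eq : M1 = (x, x) ::ₘ M2 := (Multiset.cons_erase hxx).symm
    have hfst1 : M1.map Prod.fst = C.map f := by
      rw [hM1, Multiset.map_map,
        show (Prod.fst ∘ Prod.map f f : Option V × Option V → V) = f ∘ Prod.fst from rfl,
        ← Multiset.map_map, hf1]
    have hsnd1 : M1.map Prod.snd = C'.map f := by
      rw [hM1, Multiset.map_map,
        show (Prod.snd ∘ Prod.map f f : Option V × Option V → V) = f ∘ Prod.snd from rfl,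
        ← Multiset.map_map, hf2]
    refine ⟨(C'.map f).erase x, ⟨C', hC', rfl⟩, M2, ⟨?_, ?_, ?_⟩, ?_⟩
    · show Multiset.map Prod.fst M2 = (C.map f).erase x
      rw [← hfst1, hM1eq, Multiset.map_cons, Multiset.erase_cons_head]
    · show Multiset.map Prod.snd M2 = (C'.map f).erase x
      rw [← hsnd1, hM1eq, Multiset.map_cons, Multiset.erase_cons_head]
    · intro p hp
      have hp1 : p ∈ M1 := Multiset.mem_of_mem_erase hp
      obtain ⟨⟨q1, q2⟩, hq, rfl⟩ := Multiset.mem_map.1 hp1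
      rcases hval _ hq with heq | hadj'
      · exact Or.inl (show f q1 = f q2 from congrArg f heq)
      · have hadj'' : (addPendant G x).Adj q1 q2 := hadj'
        rcases addPendant_adj.1 hadj'' with ⟨a', b', rfl, rfl, h'⟩ | ⟨rfl, rfl⟩ | ⟨rfl, rfl⟩
        · exact Or.inr h'
        · exact Or.inl rfl
        · exact Or.inl rfl
    · rcases hmem with hm | hm
      · refine Or.inl ?_
        have h1 : ((u, w) : V × V) ∈ M1 := Multiset.mem_map_of_mem (Prod.map f f) hm
        exact (Multiset.mem_erase_of_ne (by
          intro h
          apply G.ne_of_adj huw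
          have := congrArg Prod.fst h
          have h2 := congrArg Prod.snd h
          simp at this h2
          rw [this, h2])).2 h1
      · refine Or.inr ?_
        have h1 : ((w, u) : V × V) ∈ M1 := Multiset.mem_map_of_mem (Prod.map f f) hm
        exact (Multiset.mem_erase_of_ne (by
          intro h
          apply G.ne_of_adj huw
          have := congrArg Prod.fst h
          have h2 := congrArg Prod.snd h
          simp at this h2
          rw [this, h2])).2 h1
  · rintro D ⟨C, hC, rfl⟩
    rw [← Multiset.one_le_count_iff_mem, Multiset.count_erase_self]
    have := key C hC
    omega

/-- The trivial defense with all vertices occupied. -/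
lemma exists_defense_on (G : SimpleGraph V) [Finite V] (x : V) :
    ∃ k : ℕ, ∃ F : Set (Multiset V), IsDefense G k F ∧ ∀ C ∈ F, ∀ s ∈ ({x} : Set V), s ∈ C := by
  classical
  have : Fintype V := Fintype.ofFinite V
  refine ⟨Fintype.card V, {(Finset.univ.val : Multiset V)}, ⟨⟨_, rfl⟩, ?_, ?_⟩, ?_⟩
  · rintro C rfl
    exact ⟨by simp, fun u v _ => Or.inl (by simp)⟩
  · rintro C rfl u v huv
    have hu : u ∈ (Finset.univ.val : Multiset V) := by simp
    have hv : v ∈ (Finset.univ.val : Multiset V) := by simp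
    obtain ⟨M, hM, hmem⟩ := swap_move G huv hu hv
    exact ⟨_, rfl, M, hM, Or.inl hmem⟩
  · rintro C rfl s hs
    simp

/-- Let `H = G_x^+` with `v` (= `none`) the new pendant vertex. Then
`evc_v(H) = evc_x(G) + 1`. -/
theorem evcOn_pendant (V : Type) [Finite V] (G : SimpleGraph V) (x : V) :
    evcOn (addPendant G x) {(none : Option V)} = evcOn G {x} + 1 := by
  classical
  have hAne : {k | ∃ F : Set (Multiset V), IsDefense G k F ∧ ∀ C ∈ F, ∀ s ∈ ({x} : Set V),
      s ∈ C}.Nonempty := by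
    obtain ⟨k, F, h1, h2⟩ := exists_defense_on G x
    exact ⟨k, F, h1, h2⟩
  have hkA : evcOn G {x} ∈ {k | ∃ F : Set (Multiset V), IsDefense G k F ∧
      ∀ C ∈ F, ∀ s ∈ ({x} : Set V), s ∈ C} := Nat.sInf_mem hAne
  obtain ⟨F, hF, hxF⟩ := hkA
  obtain ⟨F', hF', hnF'⟩ := pendant_upper hF (fun C hC => hxF C hC x rfl)
  have hBmem : evcOn G {x} + 1 ∈ {k | ∃ F : Set (Multiset (Option V)),
      IsDefense (addPendant G x) k F ∧ ∀ C ∈ F, ∀ s ∈ ({(none : Option V)} : Set (Option V)),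
      s ∈ C} := by
    refine ⟨F', hF', ?_⟩
    rintro C hC s rfl
    exact hnF' C hC
  have hB1 : evcOn (addPendant G x) {(none : Option V)} ≤ evcOn G {x} + 1 := Nat.sInf_le hBmem
  have hkB : evcOn (addPendant G x) {(none : Option V)} ∈
      {k | ∃ F : Set (Multiset (Option V)), IsDefense (addPendant G x) k F ∧
      ∀ C ∈ F, ∀ s ∈ ({(none : Option V)} : Set (Option V)), s ∈ C} :=
    Nat.sInf_mem ⟨_, hBmem⟩
  obtain ⟨F2, hF2, hnn⟩ := hkB
  have hn2 : ∀ C ∈ F2, (none : Option V) ∈ C := fun C hC => hnn C hC none rfl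
  have hk1 : 1 ≤ evcOn (addPendant G x) {(none : Option V)} := by
    obtain ⟨C, hC⟩ := hF2.1
    have hcard := (hF2.2.1 C hC).1
    have := hn2 C hC
    have hpos : 0 < Multiset.card C := Multiset.card_pos_iff_exists_mem.2 ⟨_, this⟩
    omega
  obtain ⟨F3, hF3, hx3⟩ := pendant_lower hF2 hn2
  have hA1 : evcOn G {x} ≤ evcOn (addPendant G x) {(none : Option V)} - 1 := by
    refine Nat.sInf_le ⟨F3, hF3, ?_⟩
    rintro C hC s rfl
    exact hx3 C hC
  omega

end EVC
end
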